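/- arXiv:1306.5037 — 2 statements merged into one kernel-verified Lean document; each statement's English description precedes it below -/
import Mathlib

section
/- Let g_n in L^2(R) with supp(g_n) = [c_n, d_n], c_n < d_n, and b_n > 1/(d_n - c_n) for all n. Suppose there is epsilon > 0 such that d_{n-1} <= c_{n+1} and b_n^{-1} >= max{(d_n - c_n)/2, c_{n+1} - c_n, d_n - d_{n-1}} + epsilon for all n. Define I^-_{n,k} = [c_n, d_{n+k-1} - B^+_{n,k}] with B^+_{n,k} = sum_{j=0}^{k-1} b_{n+j}^{-1}. Then for all n in Z and k in N, I^-_{n,k+1} equals the intersection of I^-_{n,1} with the translate I^-_{n+1,k} - b_n^{-1}, and the length of I^-_{n,k+1} is strictly less than the minimum of the lengths of I^-_{n,k} and I^-_{n+1,k}. -/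
noncomputable section

/-- `B⁺_{n,k} = ∑_{j=0}^{k-1} b_{n+j}⁻¹`. -/
def Bp (b : ℤ → ℝ) (n : ℤ) (k : ℕ) : ℝ := ∑ j ∈ Finset.range k, (b (n + (j : ℤ)))⁻¹

/-- `B⁻_{n,k} = ∑_{j=0}^{k-1} b_{n-j}⁻¹`. -/
def Bm (b : ℤ → ℝ) (n : ℤ) (k : ℕ) : ℝ := ∑ j ∈ Finset.range k, (b (n - (j : ℤ)))⁻¹

/-- `I⁻_{n,k} = [c_n, d_{n+k-1} - B⁺_{n,k}]`. -/
def Imi (b c d : ℤ → ℝ) (n : ℤ) (k : ℕ) : Set ℝ :=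
  Set.Icc (c n) (d (n + (k : ℤ) - 1) - Bp b n k)

/-- `I⁺_{n,k} = [c_{n-k+1} + B⁻_{n,k}, d_n]`. -/
def Ipl (b c d : ℤ → ℝ) (n : ℤ) (k : ℕ) : Set ℝ :=
  Set.Icc (c (n - (k : ℤ) + 1) + Bm b n k) (d n)

/-- The (signed) length of `I⁻_{n,k}`. -/
def lenImi (b c d : ℤ → ℝ) (n : ℤ) (k : ℕ) : ℝ :=
  d (n + (k : ℤ) - 1) - Bp b n k - c n

end

open Set

section IntervalsImi

variable {b c d : ℤ → ℝ} {n : ℤ} {k : ℕ}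

lemma Bp_succ (b : ℤ → ℝ) (n : ℤ) (k : ℕ) :
    Bp b n (k + 1) = Bp b n k + (b (n + k))⁻¹ := by
  simp [Bp, Finset.sum_range_succ]

lemma Bp_succ_eq_inv_add_Bp_add_one (b : ℤ → ℝ) (n : ℤ) (k : ℕ) :
    Bp b n (k + 1) = (b n)⁻¹ + Bp b (n + 1) k := by
  simp only [Bp, Finset.sum_range_succ', Nat.cast_add, Nat.cast_one, Nat.cast_zero, add_zero]
  rw [add_comm]
  congr 1
  refine Finset.sum_congr rfl fun j _ => ?_
  rw [add_right_comm, add_assoc]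

lemma lenImi_succ_lt_lenImi (h : d (n + k) - d (n + k - 1) < (b (n + k))⁻¹) :
    lenImi b c d n (k + 1) < lenImi b c d n k := by
  simp only [lenImi, Bp_succ, Nat.cast_add, Nat.cast_one, ← add_assoc, add_sub_cancel_right]
  linarith

lemma lenImi_succ_lt_lenImi_add_one (h : c (n + 1) - c n < (b n)⁻¹) :
    lenImi b c d n (k + 1) < lenImi b c d (n + 1) k := by
  simp only [lenImi, Bp_succ_eq_inv_add_Bp_add_one, Nat.cast_add, Nat.cast_one]
  rw [show n + (k + 1) - 1 = n + 1 + k - 1 by ring]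
  linarith

lemma antitone_Imi (hd : ∀ m, d m - d (m - 1) ≤ (b m)⁻¹) : Antitone (Imi b c d n) := by
  refine antitone_nat_of_succ_le fun k => Icc_subset_Icc_right ?_
  have := hd (n + k)
  simp only [Bp_succ, Nat.cast_add, Nat.cast_one, ← add_assoc, add_sub_cancel_right]
  linarith

lemma Imi_succ_eq_Ici_inter_preimage (hc : c (n + 1) - (b n)⁻¹ ≤ c n) :
    Imi b c d n (k + 1) = Ici (c n) ∩ ((· + (b n)⁻¹) ⁻¹' Imi b c d (n + 1) k) := by
  have hupper : d (n + (k + 1 : ℕ) - 1) - Bp b n (k + 1)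
      = d (n + 1 + k - 1) - Bp b (n + 1) k - (b n)⁻¹ := by
    rw [Bp_succ_eq_inv_add_Bp_add_one]
    push_cast
    ring_nf
  ext x
  simp only [Imi, hupper, mem_Icc, mem_Ici, mem_inter_iff, mem_preimage]
  constructor
  · rintro ⟨hlo, hhi⟩
    exact ⟨hlo, by linarith, by linarith⟩
  · rintro ⟨hlo, -, hhi⟩
    exact ⟨hlo, by linarith⟩

lemma Imi_succ_eq_Imi_one_inter_preimage (hc : c (n + 1) - (b n)⁻¹ ≤ c n)
    (hd : ∀ m, d m - d (m - 1) ≤ (b m)⁻¹) :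
    Imi b c d n (k + 1) = Imi b c d n 1 ∩ ((· + (b n)⁻¹) ⁻¹' Imi b c d (n + 1) k) := by
  have hsub : Imi b c d n (k + 1) ⊆ Imi b c d n 1 := antitone_Imi hd (by omega)
  have hIci : Imi b c d n 1 ⊆ Ici (c n) := Icc_subset_Ici_self
  calc Imi b c d n (k + 1) = Imi b c d n 1 ∩ Imi b c d n (k + 1) := (inter_eq_right.mpr hsub).symm
    _ = Imi b c d n 1 ∩ (Ici (c n) ∩ ((· + (b n)⁻¹) ⁻¹' Imi b c d (n + 1) k)) :=
      congrArg (Imi b c d n 1 ∩ ·) (Imi_succ_eq_Ici_inter_preimage hc)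
    _ = _ := by rw [← inter_assoc, inter_eq_left.mpr hIci]

end IntervalsImi

theorem stmt4_general (b c d : ℤ → ℝ) (ε : ℝ)
    (hε : 0 < ε)
    (hbig : ∀ n, max (max ((d n - c n) / 2) (c (n + 1) - c n)) (d n - d (n - 1)) + ε ≤ (b n)⁻¹) :
    ∀ n : ℤ, ∀ k : ℕ, 1 ≤ k →
      Imi b c d n (k + 1) = Imi b c d n 1 ∩ ((· + (b n)⁻¹) ⁻¹' Imi b c d (n + 1) k) ∧
      lenImi b c d n (k + 1) < min (lenImi b c d n k) (lenImi b c d (n + 1) k) := by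
  intro n k _
  have hd (m : ℤ) : d m - d (m - 1) + ε ≤ (b m)⁻¹ :=
    le_trans (by gcongr; exact le_max_right _ _) (hbig m)
  have hc (m : ℤ) : c (m + 1) - c m + ε ≤ (b m)⁻¹ :=
    le_trans (by gcongr; exact le_trans (le_max_right _ _) (le_max_left _ _)) (hbig m)
  exact ⟨Imi_succ_eq_Imi_one_inter_preimage (by linarith [hc n]) fun m => by linarith [hd m],
    lt_min (lenImi_succ_lt_lenImi (by linarith [hd (n + k)]))
      (lenImi_succ_lt_lenImi_add_one (by linarith [hc n]))⟩

/-- Lemma 5.1(a): under the standing hypotheses,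
`I⁻_{n,k+1} = I⁻_{n,1} ∩ (I⁻_{n+1,k} - bₙ⁻¹)` with
`|I⁻_{n,k+1}| < min {|I⁻_{n,k}|, |I⁻_{n+1,k}|}`. -/
theorem stmt4 (g : ℤ → ℝ → ℂ) (b c d : ℤ → ℝ) (ε : ℝ)
    (hsupp : ∀ n, Function.support (g n) = Set.Icc (c n) (d n))
    (hcd : ∀ n, c n < d n) (hbpos : ∀ n, 0 < b n)
    (hb1 : ∀ n, 1 / (d n - c n) < b n)
    (hε : 0 < ε) (hsep : ∀ n, d (n - 1) ≤ c (n + 1))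
    (hbig : ∀ n, max (max ((d n - c n) / 2) (c (n + 1) - c n)) (d n - d (n - 1)) + ε ≤ (b n)⁻¹) :
    ∀ n : ℤ, ∀ k : ℕ, 1 ≤ k →
      Imi b c d n (k + 1) = Imi b c d n 1 ∩ ((· + (b n)⁻¹) ⁻¹' Imi b c d (n + 1) k) ∧
      lenImi b c d n (k + 1) < min (lenImi b c d n k) (lenImi b c d (n + 1) k) :=
  stmt4_general b c d ε hε hbig
end

section
/- Under the standing interval hypotheses, if I^-_{n,k} intersects I^+_{m,j} nontrivially, then m is n-1 or n-2; and if I^-_{n,k} intersects I^+_{n-2,j}, then c_n = d_{n-2} (the intersection is the single point c_n). -/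
section Intervals

variable {b c d : ℤ → ℝ} {ε : ℝ}

lemma le_Bp (hD : ∀ t, d t - d (t - 1) + ε ≤ (b t)⁻¹) (n : ℤ) (k : ℕ) :
    d (n + k - 1) - d (n - 1) + k * ε ≤ Bp b n k := by
  induction k with
  | zero => simp [Bp]
  | succ k ih =>
    have hstep := hD (n + k)
    rw [Bp, Finset.sum_range_succ, ← Bp]
    push_cast
    rw [show n + ((k : ℤ) + 1) - 1 = n + k by ring]
    linarith

lemma le_Bm (hC : ∀ t, c (t + 1) - c t + ε ≤ (b t)⁻¹) (m : ℤ) (j : ℕ) :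
    c (m + 1) - c (m - j + 1) + j * ε ≤ Bm b m j := by
  induction j with
  | zero => simp [Bm]
  | succ j ih =>
    have hstep := hC (m - j)
    rw [Bm, Finset.sum_range_succ, ← Bm]
    push_cast
    rw [show m - ((j : ℤ) + 1) + 1 = m - j by ring]
    linarith

lemma Imi_subset_Icc (hD : ∀ t, d t - d (t - 1) + ε ≤ (b t)⁻¹) (n : ℤ) (k : ℕ) :
    Imi b c d n k ⊆ Set.Icc (c n) (d (n - 1) - k * ε) := fun x ⟨hxl, hxr⟩ =>
  ⟨hxl, by linarith [le_Bp hD n k]⟩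

lemma Ipl_subset_Icc (hC : ∀ t, c (t + 1) - c t + ε ≤ (b t)⁻¹) (m : ℤ) (j : ℕ) :
    Ipl b c d m j ⊆ Set.Icc (c (m + 1) + j * ε) (d m) := fun x ⟨hxl, hxr⟩ =>
  ⟨by linarith [le_Bm hC m j], hxr⟩

lemma le_add_two_of_sep (hsep : ∀ n, d (n - 1) ≤ c (n + 1)) (t : ℤ) : d t ≤ c (t + 2) := by
  simpa [add_assoc, one_add_one_eq_two] using hsep (t + 1)

lemma monotone_of_sep_of_overlap (hsep : ∀ n, d (n - 1) ≤ c (n + 1))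
    (hov : ∀ n, c (n + 1) < d n) : Monotone c ∧ Monotone d := by
  refine ⟨monotone_int_of_le_succ fun t => ?_, monotone_int_of_le_succ fun t => ?_⟩
  · have := hov (t - 1)
    rw [sub_add_cancel] at this
    linarith [hsep t]
  · have := hov (t + 1)
    rw [add_assoc, one_add_one_eq_two] at this
    linarith [le_add_two_of_sep hsep t]

lemma Imi_inter_Ipl_eq_empty_of_le (hsep : ∀ n, d (n - 1) ≤ c (n + 1)) (hc : Monotone c)
    (hC : ∀ t, c (t + 1) - c t + ε ≤ (b t)⁻¹) (hD : ∀ t, d t - d (t - 1) + ε ≤ (b t)⁻¹)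
    (hε : 0 < ε) {n m : ℤ} {k : ℕ} (j : ℕ) (hk : 1 ≤ k) (hnm : n ≤ m) :
    Imi b c d n k ∩ Ipl b c d m j = ∅ := by
  refine Set.eq_empty_of_forall_notMem fun x ⟨hxI, hxJ⟩ => ?_
  have hx_le := (Imi_subset_Icc hD n k hxI).2
  have hx_ge := (Ipl_subset_Icc hC m j hxJ).1
  have hcm : c (n + 1) ≤ c (m + 1) := hc (by omega)
  have hkε : ε ≤ k * ε := le_mul_of_one_le_left hε.le (by exact_mod_cast hk)
  have hjε : 0 ≤ j * ε := by positivity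
  linarith [hsep n]

lemma Imi_inter_Ipl_eq_empty_of_add_three_le (hsep : ∀ n, d (n - 1) ≤ c (n + 1))
    (hd : Monotone d) (hov : ∀ n, c (n + 1) < d n) {n m : ℤ} (k j : ℕ) (hmn : m + 3 ≤ n) :
    Imi b c d n k ∩ Ipl b c d m j = ∅ := by
  refine Set.eq_empty_of_forall_notMem fun x ⟨hxI, hxJ⟩ => ?_
  have h₁ : d m ≤ d (n - 3) := hd (by omega)
  have h₂ : d (n - 3) ≤ c (n - 1) := by
    simpa [show n - 3 + 2 = n - 1 by ring] using le_add_two_of_sep hsep (n - 3)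
  have h₃ : c (n - 1) < d (n - 2) := by
    simpa [show n - 2 + 1 = n - 1 by ring] using hov (n - 2)
  have h₄ : d (n - 2) ≤ c n := by
    simpa using le_add_two_of_sep hsep (n - 2)
  linarith [hxI.1, hxJ.2]

lemma eq_of_Imi_inter_Ipl_sub_two_nonempty (hsep : ∀ n, d (n - 1) ≤ c (n + 1)) {n : ℤ}
    {k j : ℕ} (h : (Imi b c d n k ∩ Ipl b c d (n - 2) j).Nonempty) : c n = d (n - 2) := by
  obtain ⟨x, hxI, hxJ⟩ := h
  have := le_add_two_of_sep hsep (n - 2)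
  rw [sub_add_cancel] at this
  linarith [hxI.1, hxJ.2]

end Intervals

theorem stmt7_general (b c d : ℤ → ℝ) (ε : ℝ)
    (hcd : ∀ n, c n < d n)
    (hb1 : ∀ n, 1 / (d n - c n) < b n)
    (hε : 0 < ε) (hsep : ∀ n, d (n - 1) ≤ c (n + 1))
    (hbig : ∀ n, max (max ((d n - c n) / 2) (c (n + 1) - c n)) (d n - d (n - 1)) + ε ≤ (b n)⁻¹) :
    ∀ n m : ℤ, ∀ k j : ℕ, 1 ≤ k → 1 ≤ j →
      ((Imi b c d n k ∩ Ipl b c d m j).Nonempty → m = n - 1 ∨ m = n - 2) ∧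
      ((Imi b c d n k ∩ Ipl b c d (n - 2) j).Nonempty → c n = d (n - 2)) := by
  intro n m k j hk _
  have hinv t : (b t)⁻¹ < d t - c t :=
    inv_lt_of_inv_lt₀ (sub_pos.2 (hcd t)) (by simpa only [one_div] using hb1 t)
  have hC t : c (t + 1) - c t + ε ≤ (b t)⁻¹ :=
    le_trans (by gcongr; exact le_max_of_le_left (le_max_right _ _)) (hbig t)
  have hD t : d t - d (t - 1) + ε ≤ (b t)⁻¹ :=
    le_trans (by gcongr; exact le_max_right _ _) (hbig t)
  have hov t : c (t + 1) < d t := by linarith [hC t, hinv t]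
  obtain ⟨hc, hd⟩ := monotone_of_sep_of_overlap hsep hov
  refine ⟨fun hne => ?_, eq_of_Imi_inter_Ipl_sub_two_nonempty hsep⟩
  by_contra hm
  rcases (by omega : n ≤ m ∨ m + 3 ≤ n) with hnm | hmn
  · exact hne.ne_empty (Imi_inter_Ipl_eq_empty_of_le hsep hc hC hD hε j hk hnm)
  · exact hne.ne_empty (Imi_inter_Ipl_eq_empty_of_add_three_le hsep hd hov k j hmn)

/-- Lemma 5.1(d): under the standing hypotheses, if `I⁻_{n,k}` meets `I⁺_{m,j}` then
`m ∈ {n-1, n-2}`, and if `I⁻_{n,k}` meets `I⁺_{n-2,j}` then `c_n = d_{n-2}`. -/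
theorem stmt7 (g : ℤ → ℝ → ℂ) (b c d : ℤ → ℝ) (ε : ℝ)
    (hsupp : ∀ n, Function.support (g n) = Set.Icc (c n) (d n))
    (hcd : ∀ n, c n < d n) (hbpos : ∀ n, 0 < b n)
    (hb1 : ∀ n, 1 / (d n - c n) < b n)
    (hε : 0 < ε) (hsep : ∀ n, d (n - 1) ≤ c (n + 1))
    (hbig : ∀ n, max (max ((d n - c n) / 2) (c (n + 1) - c n)) (d n - d (n - 1)) + ε ≤ (b n)⁻¹) :
    ∀ n m : ℤ, ∀ k j : ℕ, 1 ≤ k → 1 ≤ j →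
      ((Imi b c d n k ∩ Ipl b c d m j).Nonempty → m = n - 1 ∨ m = n - 2) ∧
      ((Imi b c d n k ∩ Ipl b c d (n - 2) j).Nonempty → c n = d (n - 2)) :=
  stmt7_general b c d ε hcd hb1 hε hsep hbig
end
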